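/- arXiv:1310.0017 — 2 statements merged into one kernel-verified Lean document; each statement's English description precedes it below -/
import Mathlib

section
/- As a corollary of the conditional de Finetti bound: if p^{X_1,...,X_n} is a permutation-symmetric probability distribution on Σ^n, then there exists a probability measure μ on distributions q over Σ such that ‖ p^{X_1,...,X_k} − ∫ μ(dq) q^{⊗k} ‖_1 ≤ sqrt( 2 k² ln|Σ| / (n−k) ). -/
open Finset
open scoped Classical BigOperators

/-- Shannon entropy (in nats) of a distribution on a finite alphabet. -/
noncomputable def shEnt {α : Type*} [Fintype α] (p : α → ℝ) : ℝ :=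
  -∑ x, p x * Real.log (p x)

/-- Mutual information I(A:B) = H(A) + H(B) - H(AB) of a joint distribution. -/
noncomputable def mutInfo {α β : Type*} [Fintype α] [Fintype β] (p : α × β → ℝ) : ℝ :=
  shEnt (fun a => ∑ b, p (a, b)) + shEnt (fun b => ∑ a, p (a, b)) - shEnt p

/-- Conditional mutual information I(A:B|R): the average over values r of R of the
mutual information of the conditional distribution given R = r. -/
noncomputable def condMI {α β γ : Type*} [Fintype α] [Fintype β] [Fintype γ]
    (p : (α × β) × γ → ℝ) : ℝ :=
  ∑ r : γ, (∑ ab : α × β, p (ab, r)) *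
    mutInfo (fun ab : α × β => p (ab, r) / ∑ ab' : α × β, p (ab', r))

/-!
Let `H j` be the entropy of the first `j` coordinates; by symmetry it is the entropy of any `j`
of them, and the increments `H (j + 1) - H j` lie in `[0, log |Σ|]`. Condition on a block `R` of
`t` further coordinates and let `q_r` be the law of one more coordinate given `R = r`. The
marginal of the first `k` coordinates is the image of their joint law `J` with `R`, and the
mixture of the `q_r^{⊗k}` is the image of `P_R ⊗ q_R^{⊗k}`; by Pinsker their L1 distance is at
most `√(2 D)`, `D` the relative entropy of these two joint laws. Since each of the first `k`
coordinates has the same joint law with `R`, `D = k (H (t + 1) - H t) - (H (t + k) - H t)`.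
Summed over `t < n - k` these telescope to at most `k² log |Σ|`, so some `t` has
`D ≤ k² log |Σ| / (n - k)`.
-/

section

open Real InformationTheory

lemma monotoneOn_add_one_mul_log_sub :
    MonotoneOn (fun x => (x + 1) * log x - 2 * (x - 1)) (Set.Ioi 0) := by
  have hderiv : ∀ x : ℝ, 0 < x →
      HasDerivAt (fun x => (x + 1) * log x - 2 * (x - 1)) (log x + x⁻¹ - 1) x := by
    intro x hx
    refine ((((hasDerivAt_id x).add_const 1).mul (hasDerivAt_log hx.ne')).sub
      (((hasDerivAt_id x).sub_const 1).const_mul 2)).congr_deriv ?_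
    simp only [id]
    field_simp
    ring
  refine monotoneOn_of_hasDerivWithinAt_nonneg (convex_Ioi 0)
    (fun x hx => (hderiv x hx).continuousAt.continuousWithinAt)
    (fun x hx => (hderiv x (by simpa using hx)).hasDerivWithinAt) fun x hx => ?_
  linarith [one_sub_inv_le_log_of_pos (show 0 < x by simpa using hx)]

lemma three_mul_sq_sub_one_le_two_mul_add_two_mul_klFun {x : ℝ} (hx : 0 ≤ x) :
    3 * (x - 1) ^ 2 ≤ 2 * (x + 2) * klFun x := by
  set ψ : ℝ → ℝ := fun y => (y + 1) * log y - 2 * (y - 1)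
  set F : ℝ → ℝ := fun y => 2 * (y + 2) * klFun y - 3 * (y - 1) ^ 2
  have hF : Continuous F := by fun_prop [continuous_klFun]
  have hderiv : ∀ y : ℝ, 0 < y → HasDerivAt F (4 * ψ y) y := by
    intro y hy
    refine (((((hasDerivAt_id y).add_const 2).const_mul 2).mul (hasDerivAt_klFun hy.ne')).sub
      ((((hasDerivAt_id y).sub_const 1).pow 2).const_mul 3)).congr_deriv ?_
    simp only [ψ, klFun_apply, id]
    ring
  have hψ : ∀ {y z : ℝ}, 0 < y → y ≤ z → ψ y ≤ ψ z := fun hy hyz =>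
    monotoneOn_add_one_mul_log_sub hy (hy.trans_le hyz) hyz
  have hψ1 : ψ 1 = 0 := by simp [ψ]
  suffices F 1 ≤ F x by simpa [F, klFun_one] using this
  rcases le_total x 1 with hx1 | hx1
  · refine antitoneOn_of_hasDerivWithinAt_nonpos (f' := fun y => 4 * ψ y) (convex_Icc x 1)
      hF.continuousOn (fun y hy => ?_) (fun y hy => ?_) ⟨le_rfl, hx1⟩ ⟨hx1, le_rfl⟩ hx1
    all_goals rw [interior_Icc] at hy
    · exact (hderiv y (hx.trans_lt hy.1)).hasDerivWithinAt
    · linarith [hψ (hx.trans_lt hy.1) hy.2.le]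
  · refine monotoneOn_of_hasDerivWithinAt_nonneg (f' := fun y => 4 * ψ y) (convex_Icc 1 x)
      hF.continuousOn (fun y hy => ?_) (fun y hy => ?_) ⟨le_rfl, hx1⟩ ⟨hx1, le_rfl⟩ hx1
    all_goals rw [interior_Icc] at hy
    · exact (hderiv y (one_pos.trans hy.1)).hasDerivWithinAt
    · linarith [hψ one_pos hy.1.le]

noncomputable def relEnt {α : Type*} [Fintype α] (f g : α → ℝ) : ℝ :=
  ∑ x, f x * log (f x / g x)

section RelEnt

variable {α : Type*} [Fintype α] {f g : α → ℝ}

lemma mul_klFun_div {a b : ℝ} (hab : b = 0 → a = 0) :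
    b * klFun (a / b) = a * log (a / b) + b - a := by
  rcases eq_or_ne b 0 with rfl | hb
  · simp [hab rfl]
  · rw [klFun_apply]
    field_simp

theorem pinsker (hf : ∀ x, 0 ≤ f x) (hg : ∀ x, 0 ≤ g x) (hfg : ∀ x, g x = 0 → f x = 0)
    (hf1 : ∑ x, f x = 1) (hg1 : ∑ x, g x = 1) :
    (∑ x, |f x - g x|) ^ 2 ≤ 2 * relEnt f g := by
  -- Cauchy–Schwarz against the weights `(f + 2 g) / 3`, which sum to `1`
  have hpoint : ∀ x, |f x - g x| ^ 2 ≤ (f x + 2 * g x) / 3 * (2 * (g x * klFun (f x / g x))) := by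
    intro x
    rcases (hg x).eq_or_lt with h0 | hpos
    · simp [← h0, hfg x h0.symm]
    · have key := three_mul_sq_sub_one_le_two_mul_add_two_mul_klFun (div_nonneg (hf x) hpos.le)
      set r := f x / g x
      have hsub : f x - g x = g x * (r - 1) := by simp only [r]; field_simp
      have hadd : f x + 2 * g x = g x * (r + 2) := by simp only [r]; field_simp
      rw [sq_abs, hsub, hadd]
      nlinarith [mul_le_mul_of_nonneg_left key (sq_nonneg (g x))]
  calc (∑ x, |f x - g x|) ^ 2
      ≤ (∑ x, (f x + 2 * g x) / 3) * ∑ x, 2 * (g x * klFun (f x / g x)) :=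
        sum_sq_le_sum_mul_sum_of_sq_le_mul _ (fun x _ => by linarith [hf x, hg x])
          (fun x _ => by have := klFun_nonneg (div_nonneg (hf x) (hg x)); nlinarith [hg x])
          (fun x _ => hpoint x)
    _ = 2 * relEnt f g := by
        simp only [mul_klFun_div (hfg _), ← Finset.sum_div, ← Finset.mul_sum, sum_add_distrib,
          sum_sub_distrib, hf1, hg1, relEnt]
        ring

lemma relEnt_nonneg (hf : ∀ x, 0 ≤ f x) (hg : ∀ x, 0 ≤ g x) (hfg : ∀ x, g x = 0 → f x = 0)
    (hf1 : ∑ x, f x = 1) (hg1 : ∑ x, g x = 1) : 0 ≤ relEnt f g := by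
  nlinarith [pinsker hf hg hfg hf1 hg1, sq_nonneg (∑ x, |f x - g x|)]

lemma relEnt_eq_sub (hf : ∀ x, 0 ≤ f x) (hfg : ∀ x, g x = 0 → f x = 0) :
    relEnt f g = ∑ x, f x * log (f x) - ∑ x, f x * log (g x) := by
  rw [relEnt, ← sum_sub_distrib]
  refine sum_congr rfl fun x _ => ?_
  rcases (hf x).eq_or_lt with h0 | hpos
  · simp [← h0]
  · have hg : g x ≠ 0 := fun h => hpos.ne' (hfg x h)
    rw [log_div hpos.ne' hg]
    ring

end RelEnt

lemma sum_range_sub_shift_le {d : ℕ → ℝ} {C : ℝ} (hd0 : ∀ j, 0 ≤ d j) (hdC : ∀ j, d j ≤ C)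
    (T j : ℕ) : ∑ t ∈ range T, (d t - d (t + j)) ≤ j * C := by
  -- both sides of `∑_{t < T + j} d t` split as a head plus a shifted tail
  have hsplit := (sum_range_add d T j).symm.trans ((add_comm T j ▸ sum_range_add d j T))
  have hhead : ∑ i ∈ range j, d i ≤ j * C := by
    simpa using sum_le_sum fun i (_ : i ∈ range j) => hdC i
  have htail : 0 ≤ ∑ i ∈ range j, d (T + i) := sum_nonneg fun i _ => hd0 _
  simp only [sum_sub_distrib, add_comm _ j]
  linarith

lemma exists_lt_mul_sub_sum_le {d : ℕ → ℝ} {C : ℝ} (hd0 : ∀ j, 0 ≤ d j) (hdC : ∀ j, d j ≤ C)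
    (k : ℕ) {T : ℕ} (hT : 0 < T) :
    ∃ t < T, k * d t - ∑ j ∈ range k, d (t + j) ≤ k ^ 2 * C / T := by
  have htotal : ∑ t ∈ range T, (k * d t - ∑ j ∈ range k, d (t + j)) ≤ k ^ 2 * C :=
    calc ∑ t ∈ range T, (k * d t - ∑ j ∈ range k, d (t + j))
        = ∑ j ∈ range k, ∑ t ∈ range T, (d t - d (t + j)) := by
          rw [sum_comm]
          simp [sum_sub_distrib]
      _ ≤ ∑ j ∈ range k, (k * C : ℝ) := by
          refine sum_le_sum fun j hj => (sum_range_sub_shift_le hd0 hdC T j).trans ?_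
          have : (j : ℝ) ≤ k := by exact_mod_cast (mem_range.mp hj).le
          nlinarith [(hd0 0).trans (hdC 0)]
      _ = k ^ 2 * C := by simp; ring
  have hconst : ∑ _t ∈ range T, (k ^ 2 * C / T : ℝ) = k ^ 2 * C := by
    rw [sum_const, card_range, nsmul_eq_mul]
    field_simp
  obtain ⟨t, ht, hle⟩ := exists_le_of_sum_le (nonempty_range_iff.mpr hT.ne')
    (htotal.trans_eq hconst.symm)
  exact ⟨t, mem_range.mp ht, hle⟩

noncomputable def pushforward {α β : Type*} [Fintype α] (φ : α → β) (f : α → ℝ) (b : β) : ℝ :=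
  ∑ a, if φ a = b then f a else 0

section Pushforward

variable {α β γ : Type*} [Fintype α] (φ : α → β) {f : α → ℝ}

lemma pushforward_nonneg (hf : ∀ a, 0 ≤ f a) (b : β) : 0 ≤ pushforward φ f b :=
  sum_nonneg fun a _ => by split_ifs <;> simp [hf a]

lemma sum_pushforward_mul [Fintype β] (f : α → ℝ) (g : β → ℝ) :
    ∑ b, pushforward φ f b * g b = ∑ a, f a * g (φ a) := by
  simp only [pushforward, sum_mul, ite_mul, zero_mul]
  rw [sum_comm]
  simp

lemma sum_pushforward [Fintype β] (f : α → ℝ) : ∑ b, pushforward φ f b = ∑ a, f a := by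
  simpa using sum_pushforward_mul φ f 1

lemma le_pushforward_apply (hf : ∀ a, 0 ≤ f a) (a : α) : f a ≤ pushforward φ f (φ a) :=
  calc f a = if φ a = φ a then f a else 0 := by simp
    _ ≤ pushforward φ f (φ a) :=
      single_le_sum (f := fun a' => if φ a' = φ a then f a' else 0)
        (fun a' _ => by split_ifs <;> simp [hf a']) (mem_univ a)

lemma pushforward_pushforward [Fintype β] (ψ : β → γ) (f : α → ℝ) :
    pushforward ψ (pushforward φ f) = pushforward (ψ ∘ φ) f := by
  funext c
  have h := sum_pushforward_mul φ f fun b => if ψ b = c then 1 else 0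
  simp only [mul_ite, mul_one, mul_zero] at h
  exact h

lemma pushforward_fst [Fintype β] [Fintype γ] (f : β × γ → ℝ) (b : β) :
    pushforward Prod.fst f b = ∑ c, f (b, c) := by
  simp only [pushforward, Fintype.sum_prod_type]
  rw [sum_comm]
  simp

lemma shEnt_pushforward_equiv [Fintype β] (e : α ≃ β) (f : α → ℝ) :
    shEnt (pushforward e f) = shEnt f := by
  have h : pushforward e f = f ∘ e.symm := by
    funext b
    simp [pushforward, ← e.eq_symm_apply]
  rw [h, shEnt, shEnt, ← e.symm.sum_comp]
  rfl

lemma sum_abs_pushforward_sub_le [Fintype β] (f g : α → ℝ) :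
    ∑ b, |pushforward φ f b - pushforward φ g b| ≤ ∑ a, |f a - g a| := by
  calc ∑ b, |pushforward φ f b - pushforward φ g b|
      = ∑ b, |∑ a, if φ a = b then f a - g a else 0| := by
        simp [pushforward, ← sum_sub_distrib, apply_ite₂]
    _ ≤ ∑ b, pushforward φ (fun a => |f a - g a|) b :=
        sum_le_sum fun b _ => (abs_sum_le_sum_abs _ _).trans_eq (by simp [pushforward, apply_ite])
    _ = ∑ a, |f a - g a| := sum_pushforward φ _

lemma pushforward_comp_equiv (e : α ≃ α) (hf : ∀ a, f (e a) = f a) :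
    pushforward (φ ∘ e) f = pushforward φ f := by
  funext b
  conv_rhs => rw [pushforward, ← e.sum_comp]
  simp [pushforward, hf]

end Pushforward

section Entropy

variable {α β R S : Type*} [Fintype α] [Fintype β] [Fintype R] [Fintype S]

lemma shEnt_pushforward_le (φ : α → β) {f : α → ℝ} (hf : ∀ a, 0 ≤ f a) :
    shEnt (pushforward φ f) ≤ shEnt f := by
  rw [shEnt, shEnt, sum_pushforward_mul φ f fun b => log (pushforward φ f b), neg_le_neg_iff]
  refine sum_le_sum fun a _ => ?_
  rcases (hf a).eq_or_lt with h0 | hpos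
  · simp [← h0]
  · exact mul_le_mul_of_nonneg_left (log_le_log hpos (le_pushforward_apply φ hf a)) hpos.le

lemma shEnt_le_shEnt_fst_add_log_card {G : R × S → ℝ} (hG0 : ∀ x, 0 ≤ G x)
    (hG1 : ∑ x, G x = 1) : shEnt G ≤ shEnt (pushforward Prod.fst G) + log (Fintype.card S) := by
  set P := pushforward Prod.fst G
  obtain ⟨x₀, -, -⟩ := exists_ne_zero_of_sum_ne_zero (hG1.trans_ne one_ne_zero)
  have hS : (0 : ℝ) < Fintype.card S := by
    have : Nonempty S := ⟨x₀.2⟩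
    exact_mod_cast Fintype.card_pos
  have hle : ∀ x, G x ≤ P x.1 := le_pushforward_apply Prod.fst hG0
  have hP0 : ∀ r, 0 ≤ P r := pushforward_nonneg _ hG0
  have hac : ∀ x, P x.1 / Fintype.card S = 0 → G x = 0 := fun x hx =>
    le_antisymm ((hle x).trans_eq (by simpa [hS.ne'] using hx)) (hG0 x)
  have hsum : ∑ x : R × S, P x.1 / Fintype.card S = 1 := by
    simp only [Fintype.sum_prod_type, sum_const, card_univ, nsmul_eq_mul]
    simp_rw [mul_div_cancel₀ _ hS.ne']
    rw [sum_pushforward, hG1]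
  have hlog : ∑ x, G x * log (P x.1 / Fintype.card S) =
      ∑ x, G x * log (P x.1) - log (Fintype.card S) := by
    rw [← mul_one (log _), ← hG1, mul_sum, ← sum_sub_distrib]
    refine sum_congr rfl fun x _ => ?_
    rcases (hG0 x).eq_or_lt with h0 | hpos
    · simp [← h0]
    · rw [log_div (hpos.trans_le (hle x)).ne' hS.ne']
      ring
  -- Gibbs' inequality against the product of `P` with the uniform distribution on `S`
  have hgibbs := relEnt_nonneg hG0 (fun x => div_nonneg (hP0 x.1) hS.le) hac hG1 hsum
  have hP : ∑ x, G x * log (P x.1) = ∑ r, P r * log (P r) :=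
    (sum_pushforward_mul Prod.fst G fun r => log (P r)).symm
  rw [relEnt_eq_sub hG0 hac, hlog, hP] at hgibbs
  rw [shEnt, shEnt]
  linarith

end Entropy

/-- Rows where the first coordinate has probability zero are taken uniform, so that every row is a
probability vector. -/
noncomputable def condDist {R S : Type*} [Fintype R] [Fintype S] (G : R × S → ℝ) (r : R)
    (s : S) : ℝ :=
  if pushforward Prod.fst G r = 0 then (Fintype.card S : ℝ)⁻¹
  else G (r, s) / pushforward Prod.fst G r

section CondDist

variable {R S : Type*} [Fintype R] [Fintype S] {G : R × S → ℝ}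

lemma condDist_nonneg (hG0 : ∀ x, 0 ≤ G x) (r : R) (s : S) : 0 ≤ condDist G r s := by
  unfold condDist
  split_ifs
  · positivity
  · exact div_nonneg (hG0 _) (pushforward_nonneg _ hG0 _)

lemma sum_condDist [Nonempty S] (G : R × S → ℝ) (r : R) : ∑ s, condDist G r s = 1 := by
  unfold condDist
  split_ifs with h
  · simp
  · rw [← sum_div, ← pushforward_fst, div_self h]

lemma pushforward_fst_mul_condDist (hG0 : ∀ x, 0 ≤ G x) (r : R) (s : S) :
    pushforward Prod.fst G r * condDist G r s = G (r, s) := by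
  unfold condDist
  split_ifs with h
  · rw [h, zero_mul]
    exact (le_antisymm ((le_pushforward_apply Prod.fst hG0 (r, s)).trans_eq h) (hG0 _)).symm
  · exact mul_div_cancel₀ _ h

lemma sum_mul_log_condDist (hG0 : ∀ x, 0 ≤ G x) :
    ∑ x, G x * log (condDist G x.1 x.2) = shEnt (pushforward Prod.fst G) - shEnt G := by
  rw [shEnt, shEnt, sum_pushforward_mul Prod.fst G fun r => log (pushforward Prod.fst G r),
    neg_sub_neg, ← sum_sub_distrib]
  refine sum_congr rfl fun x _ => ?_
  rcases (hG0 x).eq_or_lt with h0 | hpos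
  · simp [← h0]
  · have hmul := pushforward_fst_mul_condDist hG0 x.1 x.2
    rw [← hmul] at hpos ⊢
    rw [log_mul (left_ne_zero_of_mul hpos.ne') (right_ne_zero_of_mul hpos.ne')]
    ring

end CondDist

section Mixture

variable {α R S : Type*} [Fintype α] [DecidableEq α] [Fintype R] [Fintype S]
  {J : (α → S) × R → ℝ}
  {G : R × S → ℝ}

lemma le_mul_condDist (hJ0 : ∀ x, 0 ≤ J x) (hG0 : ∀ x, 0 ≤ G x)
    (hG : ∀ a, pushforward (fun x => (x.2, x.1 a)) J = G)
    (hGP : pushforward Prod.fst G = pushforward Prod.snd J) (x : (α → S) × R) (a : α) :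
    J x ≤ pushforward Prod.snd J x.2 * condDist G x.2 (x.1 a) := by
  rw [← hGP, pushforward_fst_mul_condDist hG0, ← hG a]
  exact le_pushforward_apply _ hJ0 x

lemma mixture_factors_pos (hJ0 : ∀ x, 0 ≤ J x) (hG0 : ∀ x, 0 ≤ G x)
    (hG : ∀ a, pushforward (fun x => (x.2, x.1 a)) J = G)
    (hGP : pushforward Prod.fst G = pushforward Prod.snd J) {x : (α → S) × R} (hx : 0 < J x) :
    0 < pushforward Prod.snd J x.2 ∧ ∀ a, 0 < condDist G x.2 (x.1 a) :=
  ⟨hx.trans_le (le_pushforward_apply _ hJ0 x), fun a =>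
    pos_of_mul_pos_right (hx.trans_le (le_mul_condDist hJ0 hG0 hG hGP x a))
      (pushforward_nonneg _ hJ0 _)⟩

lemma eq_zero_of_mixture_eq_zero (hJ0 : ∀ x, 0 ≤ J x) (hG0 : ∀ x, 0 ≤ G x)
    (hG : ∀ a, pushforward (fun x => (x.2, x.1 a)) J = G)
    (hGP : pushforward Prod.fst G = pushforward Prod.snd J) (x : (α → S) × R)
    (hx : pushforward Prod.snd J x.2 * ∏ a, condDist G x.2 (x.1 a) = 0) : J x = 0 := by
  by_contra hne
  obtain ⟨hP, hq⟩ := mixture_factors_pos hJ0 hG0 hG hGP ((hJ0 x).lt_of_ne' hne)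
  exact (mul_pos hP (prod_pos fun a _ => hq a)).ne' hx

lemma relEnt_mixture_eq (hJ0 : ∀ x, 0 ≤ J x) (hG0 : ∀ x, 0 ≤ G x)
    (hG : ∀ a, pushforward (fun x => (x.2, x.1 a)) J = G)
    (hGP : pushforward Prod.fst G = pushforward Prod.snd J) :
    relEnt J (fun x => pushforward Prod.snd J x.2 * ∏ a, condDist G x.2 (x.1 a)) =
      Fintype.card α * (shEnt G - shEnt (pushforward Prod.snd J)) -
        (shEnt J - shEnt (pushforward Prod.snd J)) := by
  have hpos := fun x => mixture_factors_pos (x := x) hJ0 hG0 hG hGP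
  have hac := eq_zero_of_mixture_eq_zero hJ0 hG0 hG hGP
  have hlog : ∀ x, J x * log (pushforward Prod.snd J x.2 * ∏ a, condDist G x.2 (x.1 a)) =
      J x * log (pushforward Prod.snd J x.2) + ∑ a, J x * log (condDist G x.2 (x.1 a)) := by
    intro x
    rcases (hJ0 x).eq_or_lt with h0 | hx
    · simp [← h0]
    · obtain ⟨hP, hq⟩ := hpos x hx
      rw [log_mul hP.ne' (prod_pos fun a _ => hq a).ne', log_prod fun a _ => (hq a).ne', mul_add,
        mul_sum]
  have hP : ∑ x, J x * log (pushforward Prod.snd J x.2) = -shEnt (pushforward Prod.snd J) := by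
    rw [shEnt, neg_neg, sum_pushforward_mul]
  have hq : ∀ a, ∑ x, J x * log (condDist G x.2 (x.1 a)) =
      shEnt (pushforward Prod.snd J) - shEnt G := by
    intro a
    rw [← hGP, ← sum_mul_log_condDist hG0,
      ← sum_pushforward_mul (fun x => (x.2, x.1 a)) J fun z => log (condDist G z.1 z.2), hG a]
  rw [relEnt_eq_sub hJ0 hac, sum_congr rfl fun x _ => hlog x, sum_add_distrib, sum_comm,
    sum_congr rfl fun a _ => hq a, hP, sum_const, card_univ, nsmul_eq_mul]
  unfold shEnt
  ring

theorem exists_iid_mixture_sq_le [Nonempty S] (hJ0 : ∀ x, 0 ≤ J x) (hJ1 : ∑ x, J x = 1)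
    (hG0 : ∀ x, 0 ≤ G x) (hG : ∀ a, pushforward (fun x => (x.2, x.1 a)) J = G)
    (hGP : pushforward Prod.fst G = pushforward Prod.snd J) :
    ∃ q : R → S → ℝ, (∀ r, (∀ s, 0 ≤ q r s) ∧ ∑ s, q r s = 1) ∧
      (∑ y, |pushforward Prod.fst J y -
          ∑ r, pushforward Prod.snd J r * ∏ a, q r (y a)|) ^ 2 ≤
        2 * (Fintype.card α * (shEnt G - shEnt (pushforward Prod.snd J)) -
          (shEnt J - shEnt (pushforward Prod.snd J))) := by
  refine ⟨condDist G, fun r => ⟨condDist_nonneg hG0 r, sum_condDist G r⟩, ?_⟩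
  set M : (α → S) × R → ℝ := fun x => pushforward Prod.snd J x.2 * ∏ a, condDist G x.2 (x.1 a)
  have hM0 : ∀ x, 0 ≤ M x := fun x =>
    mul_nonneg (pushforward_nonneg _ hJ0 _) (prod_nonneg fun a _ => condDist_nonneg hG0 _ _)
  have hM1 : ∑ x, M x = 1 := by
    simp only [M, Fintype.sum_prod_type]
    rw [sum_comm, ← hJ1, ← sum_pushforward Prod.snd J]
    refine sum_congr rfl fun r _ => ?_
    rw [← mul_sum, ← Fintype.prod_sum fun _ s => condDist G r s]
    simp [sum_condDist]
  calc (∑ y, |pushforward Prod.fst J y -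
          ∑ r, pushforward Prod.snd J r * ∏ a, condDist G r (y a)|) ^ 2
      = (∑ y, |pushforward Prod.fst J y - pushforward Prod.fst M y|) ^ 2 := by
        simp only [pushforward_fst]
        rfl
    _ ≤ (∑ x, |J x - M x|) ^ 2 :=
        pow_le_pow_left₀ (sum_nonneg fun _ _ => abs_nonneg _)
          (sum_abs_pushforward_sub_le Prod.fst J M) 2
    _ ≤ 2 * relEnt J M := pinsker hJ0 hM0 (eq_zero_of_mixture_eq_zero hJ0 hG0 hG hGP) hJ1 hM1
    _ = _ := by rw [relEnt_mixture_eq hJ0 hG0 hG hGP]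

end Mixture

def PermInvariant {ι S : Type*} (p : (ι → S) → ℝ) : Prop :=
  ∀ (σ : Equiv.Perm ι) (w : ι → S), p (w ∘ σ) = p w

noncomputable def marginal {ι S α : Type*} [Fintype ι] [DecidableEq ι] [Fintype S] (p : (ι → S) → ℝ)
    (f : α → ι) : (α → S) → ℝ :=
  pushforward (fun w => w ∘ f) p

lemma exists_perm_comp_eq {ι α : Type*} [Finite ι] {f g : α → ι} (hf : Function.Injective f)
    (hg : Function.Injective g) : ∃ σ : Equiv.Perm ι, σ ∘ f = g := by
  let e : {x // x ∈ Set.range f} ≃ {x // x ∈ Set.range g} :=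
    (Equiv.ofInjective f hf).symm.trans (Equiv.ofInjective g hg)
  refine ⟨e.extendSubtype, funext fun a => ?_⟩
  simp [Equiv.extendSubtype_apply_of_mem _ _ (Set.mem_range_self a), e]

section Marginal

variable {ι S α β : Type*} [Fintype ι] [DecidableEq ι] [Fintype S] {p : (ι → S) → ℝ}

lemma marginal_apply (p : (ι → S) → ℝ) (f : α → ι) (y : α → S) :
    marginal p f y = ∑ w, if ∀ a, w (f a) = y a then p w else 0 := by
  simp [marginal, pushforward, funext_iff]

lemma marginal_eq_of_injective (hp : PermInvariant p) {f g : α → ι}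
    (hf : Function.Injective f) (hg : Function.Injective g) : marginal p f = marginal p g := by
  obtain ⟨σ, rfl⟩ := exists_perm_comp_eq hf hg
  exact (pushforward_comp_equiv (fun w => w ∘ f) (Equiv.arrowCongr σ.symm (Equiv.refl S))
    (hp σ)).symm

lemma shEnt_marginal_eq_of_card_eq [Fintype α] [DecidableEq α] [Fintype β] [DecidableEq β]
    (hp : PermInvariant p) {f : α → ι} {g : β → ι}
    (hf : Function.Injective f) (hg : Function.Injective g)
    (h : Fintype.card α = Fintype.card β) : shEnt (marginal p f) = shEnt (marginal p g) := by
  let e := Fintype.equivOfCardEq h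
  have hcomp : marginal p f =
      pushforward (Equiv.arrowCongr e.symm (Equiv.refl S)) (marginal p (f ∘ e.symm)) := by
    rw [marginal, marginal, pushforward_pushforward]
    congr
    funext w a
    simp
  rw [hcomp, shEnt_pushforward_equiv, marginal_eq_of_injective hp (hf.comp e.symm.injective) hg]

end Marginal

noncomputable def blockEnt {n : ℕ} {S : Type*} [Fintype S] (p : (Fin n → S) → ℝ) (j : ℕ) : ℝ :=
  shEnt (marginal p (Fin.castLE (min_le_right j n)))

noncomputable def pairMarginal {ι S β : Type*} [Fintype ι] [DecidableEq ι] [Fintype S]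
    (p : (ι → S) → ℝ) (f : β → ι) (c : ι) : (β → S) × S → ℝ :=
  pushforward (fun w => (w ∘ f, w c)) p

section Blocks

variable {ι S β : Type*} [Fintype ι] [DecidableEq ι] [Fintype S] [Fintype β] [DecidableEq β]
  {p : (ι → S) → ℝ}

omit [Fintype ι] [DecidableEq ι] [Fintype β] [DecidableEq β] in
lemma injective_sumElim_const {f : β → ι} (hf : Function.Injective f) {c : ι}
    (hc : c ∉ Set.range f) : Function.Injective (Sum.elim f fun _ : Unit => c) :=
  hf.sumElim (Function.injective_of_subsingleton _) fun b _ h => hc ⟨b, h⟩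

lemma pairMarginal_eq_pushforward_marginal (f : β → ι) (c : ι) :
    pairMarginal p f c = pushforward ((Equiv.sumArrowEquivProdArrow β Unit S).trans
      ((Equiv.refl _).prodCongr (Equiv.funUnique Unit S)))
        (marginal p (Sum.elim f fun _ => c)) := by
  rw [marginal, pushforward_pushforward]
  rfl

lemma pushforward_fst_pairMarginal (f : β → ι) (c : ι) :
    pushforward Prod.fst (pairMarginal p f c) = marginal p f := by
  rw [pairMarginal, pushforward_pushforward]
  rfl

lemma pairMarginal_eq_of_notMem_range (hp : PermInvariant p) {f : β → ι}
    (hf : Function.Injective f) {c c' : ι} (hc : c ∉ Set.range f) (hc' : c' ∉ Set.range f) :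
    pairMarginal p f c = pairMarginal p f c' := by
  rw [pairMarginal_eq_pushforward_marginal, pairMarginal_eq_pushforward_marginal,
    marginal_eq_of_injective hp (injective_sumElim_const hf hc) (injective_sumElim_const hf hc')]

end Blocks

section BlockEntropy

variable {n : ℕ} {S α β : Type*} [Fintype S] {p : (Fin n → S) → ℝ}

lemma shEnt_marginal_eq_blockEnt [Fintype α] [DecidableEq α] (hp : PermInvariant p) {f : α → Fin n}
    (hf : Function.Injective f) : shEnt (marginal p f) = blockEnt p (Fintype.card α) :=
  shEnt_marginal_eq_of_card_eq hp hf (Fin.castLE_injective _) <| by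
    simpa using Fintype.card_le_of_injective f hf

lemma blockEnt_of_le (hp : PermInvariant p) {j : ℕ} (h : n ≤ j) : blockEnt p j = blockEnt p n := by
  have := shEnt_marginal_eq_blockEnt hp (Fin.castLE_injective (min_le_right j n))
  rw [Fintype.card_fin] at this
  exact this.trans (congrArg (blockEnt p) (min_eq_right h))

lemma shEnt_pairMarginal [Fintype β] [DecidableEq β] (hp : PermInvariant p) {f : β → Fin n}
    (hf : Function.Injective f) {c : Fin n} (hc : c ∉ Set.range f) :
    shEnt (pairMarginal p f c) = blockEnt p (Fintype.card β + 1) := by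
  rw [pairMarginal_eq_pushforward_marginal, shEnt_pushforward_equiv,
    shEnt_marginal_eq_blockEnt hp (injective_sumElim_const hf hc), Fintype.card_sum,
    Fintype.card_unit]

lemma blockEnt_le_succ_and_succ_le (hp0 : ∀ w, 0 ≤ p w) (hp1 : ∑ w, p w = 1)
    (hp : PermInvariant p) (j : ℕ) :
    blockEnt p j ≤ blockEnt p (j + 1) ∧
      blockEnt p (j + 1) ≤ blockEnt p j + log (Fintype.card S) := by
  rcases lt_or_ge j n with hj | hj
  · set G := pairMarginal p (Fin.castLE hj.le) ⟨j, hj⟩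
    have hc : (⟨j, hj⟩ : Fin n) ∉ Set.range (Fin.castLE hj.le) := by
      rintro ⟨i, hi⟩
      exact i.isLt.ne (congrArg Fin.val hi)
    have hG : shEnt G = blockEnt p (j + 1) := by
      simpa using shEnt_pairMarginal hp (Fin.castLE_injective hj.le) hc
    have hP : shEnt (pushforward Prod.fst G) = blockEnt p j := by
      rw [pushforward_fst_pairMarginal]
      simpa using shEnt_marginal_eq_blockEnt hp (Fin.castLE_injective hj.le)
    have hG0 : ∀ x, 0 ≤ G x := pushforward_nonneg _ hp0
    rw [← hG, ← hP]
    exact ⟨shEnt_pushforward_le _ hG0,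
      shEnt_le_shEnt_fst_add_log_card hG0 ((sum_pushforward _ _).trans hp1)⟩
  · rw [blockEnt_of_le hp hj, blockEnt_of_le hp (hj.trans j.le_succ)]
    exact ⟨le_rfl, le_add_of_nonneg_right (log_natCast_nonneg _)⟩

lemma exists_lt_blockEnt_gap_le (hp0 : ∀ w, 0 ≤ p w) (hp1 : ∑ w, p w = 1)
    (hp : PermInvariant p) {k : ℕ} (hkn : k < n) :
    ∃ t < n - k, k * (blockEnt p (t + 1) - blockEnt p t) - (blockEnt p (k + t) - blockEnt p t) ≤
      k ^ 2 * log (Fintype.card S) / (n - k : ℕ) := by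
  have hgap := blockEnt_le_succ_and_succ_le hp0 hp1 hp
  obtain ⟨t, ht, hle⟩ := exists_lt_mul_sub_sum_le
    (d := fun j => blockEnt p (j + 1) - blockEnt p j) (C := log (Fintype.card S))
    (fun j => sub_nonneg.mpr (hgap j).1) (fun j => by linarith [(hgap j).2]) k
    (T := n - k) (by omega)
  refine ⟨t, ht, le_of_eq_of_le ?_ hle⟩
  rw [add_comm k t]
  exact congrArg _ (sum_range_sub (fun j => blockEnt p (t + j)) k).symm

end BlockEntropy

theorem exists_iid_mixture_marginal_sq_le {n : ℕ} {S : Type*} [Fintype S] [Nonempty S]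
    {p : (Fin n → S) → ℝ} (hp0 : ∀ w, 0 ≤ p w) (hp1 : ∑ w, p w = 1) (hp : PermInvariant p)
    {k t : ℕ} (hkt : k + t < n) :
    ∃ q : (Fin t → S) → S → ℝ, (∀ r, (∀ s, 0 ≤ q r s) ∧ ∑ s, q r s = 1) ∧
      (∑ y : Fin k → S, |marginal p (Fin.castLE (by omega : k ≤ n)) y -
          ∑ r, marginal p (Fin.castLE hkt.le ∘ Fin.natAdd k) r * ∏ a, q r (y a)|) ^ 2 ≤
        2 * (k * (blockEnt p (t + 1) - blockEnt p t) - (blockEnt p (k + t) - blockEnt p t)) := by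
  set fY : Fin k → Fin n := Fin.castLE (by omega)
  set fR : Fin t → Fin n := Fin.castLE hkt.le ∘ Fin.natAdd k
  set c : Fin n := ⟨k + t, hkt⟩
  have hfR : Function.Injective fR := (Fin.castLE_injective _).comp (Fin.natAdd_injective t k)
  have hYR : ∀ a, fY a ∉ Set.range fR := by
    rintro a ⟨i, hi⟩
    have := congrArg Fin.val hi
    simp [fY, fR] at this
    omega
  have hcR : c ∉ Set.range fR := by
    rintro ⟨i, hi⟩
    have := congrArg Fin.val hi
    simp [c, fR] at this
    omega
  set J := pushforward (fun w => (w ∘ fY, w ∘ fR)) p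
  have hJ : J = pushforward (Equiv.sumArrowEquivProdArrow _ _ _) (marginal p (Sum.elim fY fR)) := by
    rw [marginal, pushforward_pushforward]
    rfl
  have hG : ∀ a, pushforward (fun x => (x.2, x.1 a)) J = pairMarginal p fR c := fun a => by
    rw [← pairMarginal_eq_of_notMem_range hp hfR (hYR a) hcR, pushforward_pushforward]
    rfl
  have hJfst : pushforward Prod.fst J = marginal p fY := by rw [pushforward_pushforward]; rfl
  have hJsnd : pushforward Prod.snd J = marginal p fR := by rw [pushforward_pushforward]; rfl
  obtain ⟨q, hq, hbound⟩ := exists_iid_mixture_sq_le (G := pairMarginal p fR c)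
    (pushforward_nonneg _ hp0) ((sum_pushforward _ _).trans hp1) (pushforward_nonneg _ hp0) hG
    (by rw [pushforward_fst_pairMarginal, hJsnd])
  refine ⟨q, hq, ?_⟩
  have hHJ : shEnt J = blockEnt p (k + t) := by
    rw [hJ, shEnt_pushforward_equiv, shEnt_marginal_eq_blockEnt hp
      ((Fin.castLE_injective _).sumElim hfR fun a i h => hYR a ⟨i, h.symm⟩)]
    simp
  rw [hJfst, hJsnd, hHJ, shEnt_pairMarginal hp hfR hcR, shEnt_marginal_eq_blockEnt hp hfR] at hbound
  simpa using hbound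

end

/-- de Finetti corollary for permutation-symmetric distributions: if p on Σ^n is invariant
under all permutations of the coordinates, then its marginal on the first k coordinates is
within L1 distance sqrt(2 k² ln|Σ| / (n-k)) of a convex mixture of i.i.d. product
distributions. -/
theorem symmetric_deFinetti {n k : ℕ} {S : Type*} [Fintype S]
    (p : (Fin n → S) → ℝ) (hpos : ∀ w, 0 ≤ p w) (hsum : ∑ w, p w = 1)
    (hsymm : ∀ (π : Equiv.Perm (Fin n)) (w : Fin n → S), p (w ∘ π) = p w)
    (hkn : k < n) :
    ∃ (N : ℕ) (wt : Fin N → ℝ) (q : Fin N → S → ℝ),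
      (∀ j, 0 ≤ wt j) ∧ (∑ j, wt j = 1) ∧
      (∀ j, (∀ s, 0 ≤ q j s) ∧ ∑ s, q j s = 1) ∧
      ∑ y : Fin k → S,
          |(∑ w : Fin n → S,
              if ∀ a : Fin k, w (Fin.castLE hkn.le a) = y a then p w else 0) -
            ∑ j, wt j * ∏ a : Fin k, q j (y a)|
        ≤ Real.sqrt (2 * k ^ 2 * Real.log (Fintype.card S) / (n - k)) := by
  obtain ⟨w₀, -, -⟩ := exists_ne_zero_of_sum_ne_zero (hsum.trans_ne one_ne_zero)
  have : Nonempty S := ⟨w₀ ⟨0, by omega⟩⟩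
  obtain ⟨t, ht, hgap⟩ := exists_lt_blockEnt_gap_le hpos hsum hsymm hkn
  obtain ⟨q, hq, hsq⟩ :=
    exists_iid_mixture_marginal_sq_le hpos hsum hsymm (k := k) (t := t) (by omega)
  let e := Fintype.equivFin (Fin t → S)
  refine ⟨_, fun j => marginal p (Fin.castLE (by omega) ∘ Fin.natAdd k) (e.symm j),
    fun j => q (e.symm j), fun j => pushforward_nonneg _ hpos _, ?_, fun j => hq _, ?_⟩
  · rw [e.symm.sum_comp (marginal p _), marginal, sum_pushforward, hsum]
  refine Real.le_sqrt_of_sq_le (Eq.trans_le ?_ (hsq.trans ?_))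
  · refine congrArg (· ^ 2) (sum_congr rfl fun y _ => ?_)
    rw [marginal_apply, e.symm.sum_comp fun r => marginal p _ r * ∏ a, q r (y a)]
    -- the two `if`s differ only in their `Decidable` instances
    congr!
  · rw [Nat.cast_sub hkn.le] at hgap
    rw [mul_assoc, mul_div_assoc]
    linarith
end

section
/- Every dimension d admits a 4-design of size at most d^8: there exists a finite set of pure states {|φ_x⟩} in C^d with a probability distribution {p_x}, with at most d^8 elements, such that Σ_x p_x (|φ_x⟩⟨φ_x|)^{⊗4} equals the maximally mixed state on the symmetric subspace of (C^d)^{⊗4}. -/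
open Finset
open scoped Classical BigOperators ComplexOrder

/-- Trace norm of a complex matrix: the trace of the positive square root of AᴴA. -/
noncomputable def traceNorm {n : Type*} [Fintype n] [DecidableEq n]
    (A : Matrix n n ℂ) : ℝ :=
  (((Matrix.posSemidef_conjTranspose_mul_self A).1.eigenvectorUnitary : Matrix n n ℂ) *
      Matrix.diagonal (((↑) : ℝ → ℂ) ∘ (√·) ∘ (Matrix.posSemidef_conjTranspose_mul_self A).1.eigenvalues) *
      (star (Matrix.posSemidef_conjTranspose_mul_self A).1.eigenvectorUnitary : Matrix n n ℂ)).trace.re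

/-- Tensor (Kronecker) product of k matrices of size d, acting on (C^d)^{⊗k},
whose index set is Fin k → Fin d. -/
noncomputable def piKron {k d : ℕ} (M : Fin k → Matrix (Fin d) (Fin d) ℂ) :
    Matrix (Fin k → Fin d) (Fin k → Fin d) ℂ :=
  Matrix.of fun f g => ∏ i, M i (f i) (g i)

/-- The rank-one projector |v⟩⟨v| associated to a vector v in C^d. -/
noncomputable def vecProj {d : ℕ} (v : Fin d → ℂ) : Matrix (Fin d) (Fin d) ℂ :=
  Matrix.of fun i j => v i * star (v j)

/-- Von Neumann entropy (in nats) of a Hermitian matrix, via its eigenvalues. -/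
noncomputable def vN {n : Type*} [Fintype n] [DecidableEq n] (A : Matrix n n ℂ) : ℝ :=
  if h : A.IsHermitian then -∑ i, h.eigenvalues i * Real.log (h.eigenvalues i) else 0

/-- The permutation operator on (C^d)^{⊗4} associated to a permutation of the four factors. -/
noncomputable def permMat (d : ℕ) (π : Equiv.Perm (Fin 4)) :
    Matrix (Fin 4 → Fin d) (Fin 4 → Fin d) ℂ :=
  Matrix.of fun f g => if ∀ i, g i = f (π i) then 1 else 0

/-- The orthogonal projector onto the symmetric subspace of (C^d)^{⊗4}: the average of
all permutation operators. -/
noncomputable def symProj4 (d : ℕ) : Matrix (Fin 4 → Fin d) (Fin 4 → Fin d) ℂ :=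
  ((Nat.factorial 4 : ℂ))⁻¹ • ∑ π : Equiv.Perm (Fin 4), permMat d π

/-!
Average `(|ψ⟩⟨ψ|)^{⊗4}` over a random `ψ ∈ ℂ^d` with i.i.d. coordinates `w` whose moments
`E[w^a w̄^b] = δ_ab a!` (`a, b ≤ 4`) are those of a standard complex Gaussian; such a `w` with
finitely many values exists. Entry `(f, g)` of the average is `∏_j E[w^{a_j} w̄^{b_j}]`, where
`a_j`, `b_j` count the occurrences of `j` in `f` and `g`, and this is the number of permutations
`π` with `f ∘ π = g`: the average is `∑_π P_π = 4! P_sym`. Normalising each `ψ` writes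
`P_sym / tr P_sym` as a convex combination of pure fourth tensor powers. These are Hermitian of
trace one, and affinely independent points of the hyperplane `tr = 1` are linearly independent,
so Carathéodory's theorem leaves at most `dim_ℝ Herm(d^4) = d^8` of them.
-/

theorem Fintype.prod_comp_eq_prod_pow_card {α ι M : Type*} [Fintype α] [Fintype ι] [CommMonoid M]
    (h : ι → M) (f : α → ι) : ∏ a, h (f a) = ∏ j, h j ^ Nat.card {a // f a = j} := by
  rw [← Finset.prod_fiberwise Finset.univ f]
  refine Finset.prod_congr rfl fun j _ => ?_
  rw [Finset.prod_congr rfl fun a ha => congrArg h (Finset.mem_filter.mp ha).2, Finset.prod_const,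
    Nat.card_eq_fintype_card, Fintype.card_subtype]

theorem Equiv.Perm.card_comp_eq {α ι : Type*} [Finite α] [Fintype ι] (f g : α → ι) :
    Nat.card {π : Equiv.Perm α // f ∘ π = g} =
      ∏ j, if Nat.card {a // f a = j} = Nat.card {a // g a = j}
        then (Nat.card {a // f a = j}).factorial else 0 := by
  have := Fintype.ofFinite α
  by_cases h : ∀ j, Nat.card {a // f a = j} = Nat.card {a // g a = j}
  · obtain ⟨σ, hσ⟩ : ∃ σ : Equiv.Perm α, f ∘ σ = g :=
      ⟨Equiv.ofFiberEquiv fun j => (Finite.card_eq.mp (h j)).some.symm,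
        funext (Equiv.ofFiberEquiv_map _)⟩
    rw [Finset.prod_congr rfl fun j _ => if_pos (h j)]
    -- The solutions `π` form a coset of the stabilizer of `f`.
    calc Nat.card {π : Equiv.Perm α // f ∘ π = g}
        = Nat.card {π : Equiv.Perm α // f ∘ π = f} := by
          refine Nat.card_congr ((Equiv.mulRight σ⁻¹).subtypeEquiv fun π => ?_)
          rw [Equiv.coe_mulRight, Equiv.Perm.coe_mul, ← Function.comp_assoc, Equiv.Perm.inv_def,
            Equiv.comp_symm_eq, hσ]
      _ = _ := by
          simp only [Nat.card_eq_fintype_card]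
          convert DomMulAct.stabilizer_card f
  · obtain ⟨j, hj⟩ := not_forall.mp h
    rw [Finset.prod_eq_zero (Finset.mem_univ j) (if_neg hj), Nat.card_eq_zero]
    refine Or.inl ⟨fun ⟨π, hπ⟩ => hj ?_⟩
    exact (Nat.card_congr (π.subtypeEquiv fun a => by rw [← hπ]; rfl)).symm

theorem IsPrimitiveRoot.sum_pow_mul_star_pow {ζ : ℂ} {n : ℕ} (hζ : IsPrimitiveRoot ζ n) {a b : ℕ}
    (ha : a < n) (hb : b < n) :
    ∑ m : Fin n, (ζ ^ (m : ℕ)) ^ a * star (ζ ^ (m : ℕ)) ^ b = if a = b then (n : ℂ) else 0 := by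
  have hζ0 : ζ ≠ 0 := hζ.ne_zero (by omega)
  set c := ζ ^ ((a : ℤ) - b)
  have hterm : ∀ m : ℕ, (ζ ^ m) ^ a * star (ζ ^ m) ^ b = c ^ m := by
    intro m
    have hnorm : ‖ζ ^ m‖ = 1 := by rw [norm_pow, hζ.norm'_eq_one (by omega), one_pow]
    rw [RCLike.star_def, ← Complex.inv_eq_conj hnorm, inv_pow, ← div_eq_mul_inv, ← pow_mul,
      ← pow_mul, ← zpow_natCast, ← zpow_natCast, ← zpow_sub₀ hζ0, ← zpow_natCast c, ← zpow_mul]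
    push_cast
    ring_nf
  simp only [hterm, Fin.sum_univ_eq_sum_range (fun m => c ^ m)]
  split_ifs with hab
  · simp [c, hab]
  · have hc : c ≠ 1 := by
      rw [Ne, hζ.zpow_eq_one_iff_dvd]
      intro hdvd
      have := Int.eq_zero_of_abs_lt_dvd hdvd (by rw [abs_lt]; omega)
      omega
    rw [geom_sum_eq hc, ← zpow_natCast, ← zpow_mul, mul_comm, zpow_mul, zpow_natCast,
      hζ.pow_eq_one, one_zpow, sub_self, zero_div]

theorem AffineIndependent.linearIndependent_of_forall_map_eq_one {k V ι : Type*} [Ring k]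
    [AddCommGroup V] [Module k V] {p : ι → V} (hp : AffineIndependent k p) (f : V →ₗ[k] k)
    (hf : ∀ i, f (p i) = 1) : LinearIndependent k p := by
  rw [linearIndependent_iff']
  intro s g hg i hi
  have hsum : ∑ i ∈ s, g i = 0 := by simpa [map_sum, hf] using congrArg f hg
  exact hp s g hsum (by rw [s.weightedVSub_eq_linear_combination hsum, hg]) i hi

theorem exists_convexCombination_card_le_finrank {E : Type*} [AddCommGroup E] [Module ℝ E]
    {S : Set E} (V : Submodule ℝ E) [FiniteDimensional ℝ V] (hSV : S ⊆ V) (f : E →ₗ[ℝ] ℝ)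
    (hf : ∀ s ∈ S, f s = 1) {x : E} (hx : x ∈ convexHull ℝ S) :
    ∃ N ≤ Module.finrank ℝ V, ∃ (w : Fin N → ℝ) (z : Fin N → E),
      (∀ i, 0 ≤ w i) ∧ ∑ i, w i = 1 ∧ (∀ i, z i ∈ S) ∧ ∑ i, w i • z i = x := by
  obtain ⟨ι, _, z, w, hzS, hz, hw0, hw1, hwz⟩ := eq_pos_convex_span_of_mem_convexHull hx
  have hmem : ∀ i, z i ∈ S := fun i => hzS ⟨i, rfl⟩
  have hli : LinearIndependent ℝ fun i => (⟨z i, hSV (hmem i)⟩ : V) :=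
    .of_comp V.subtype (hz.linearIndependent_of_forall_map_eq_one f fun i => hf _ (hmem i))
  let e := (Fintype.equivFin ι).symm
  exact ⟨_, hli.fintype_card_le_finrank, w ∘ e, z ∘ e, fun i => (hw0 _).le,
    (e.sum_comp w).trans hw1, fun i => hmem _, (e.sum_comp fun i => w i • z i).trans hwz⟩

theorem finrank_selfAdjoint_matrix_le (n : Type*) [Fintype n] :
    Module.finrank ℝ (selfAdjoint.submodule ℝ (Matrix n n ℂ)) ≤ Fintype.card n ^ 2 := by
  let L : Matrix n n ℂ →ₗ[ℝ] n × n → ℝ :=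
    { toFun := fun A p => (A p.1 p.2).re + (A p.1 p.2).im
      map_add' := fun A B => by ext; simp [add_add_add_comm]
      map_smul' := fun r A => by ext; simp [mul_add] }
  -- For Hermitian `A` the `(i, j)` and `(j, i)` coordinates of `L A` are `re ± im` of `A i j`.
  have hinj : Function.Injective (L ∘ₗ (selfAdjoint.submodule ℝ (Matrix n n ℂ)).subtype) := by
    rw [← LinearMap.ker_eq_bot, LinearMap.ker_eq_bot']
    rintro ⟨A, hA⟩ hLA
    have hL : ∀ i j, (A i j).re + (A i j).im = 0 := fun i j => congrFun hLA (i, j)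
    ext i j
    have hji := hL j i
    rw [← Matrix.IsHermitian.apply hA j i, RCLike.star_def, Complex.conj_re, Complex.conj_im] at hji
    have hij := hL i j
    exact Complex.ext (show (A i j).re = 0 by linarith) (show (A i j).im = 0 by linarith)
  calc Module.finrank ℝ (selfAdjoint.submodule ℝ (Matrix n n ℂ))
      ≤ Module.finrank ℝ (n × n → ℝ) := LinearMap.finrank_le_finrank_of_injective hinj
    _ = Fintype.card n ^ 2 := by simp [sq]

theorem inv_trace_smul_sum_mem_convexHull {n ι : Type*} [Fintype n] [Fintype ι]
    {S : Set (Matrix n n ℂ)} (hS : ∀ A ∈ S, A.trace = 1) {c : ι → ℝ} (hc : ∀ i, 0 ≤ c i)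
    {s : ι → Matrix n n ℂ} (hs : ∀ i, s i ∈ S) (hY : ∑ i, (c i : ℂ) • s i ≠ 0) :
    (∑ i, (c i : ℂ) • s i).trace⁻¹ • ∑ i, (c i : ℂ) • s i ∈ convexHull ℝ S := by
  have htrace : (∑ i, (c i : ℂ) • s i).trace = ((∑ i, c i : ℝ) : ℂ) := by
    simp [Matrix.trace_sum, Matrix.trace_smul, hS _ (hs _)]
  have hc0 : ∑ i, c i ≠ 0 := by
    intro h0
    have hc0 := (Finset.sum_eq_zero_iff_of_nonneg fun i _ => hc i).mp h0
    exact hY (by simp [hc0])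
  refine mem_convexHull_of_exists_fintype (fun i => c i / ∑ j, c j) s
    (fun i => div_nonneg (hc i) (Finset.sum_nonneg fun j _ => hc j))
    (by rw [← Finset.sum_div, div_self hc0]) hs ?_
  rw [htrace, Finset.smul_sum]
  refine Finset.sum_congr rfl fun i _ => ?_
  rw [← Complex.coe_smul, smul_smul, div_eq_inv_mul, Complex.ofReal_mul, Complex.ofReal_inv]

section TensorPowers

variable {k d : ℕ}

theorem vecProj_smul (c : ℂ) (v : Fin d → ℂ) : vecProj (c • v) = (c * star c) • vecProj v := by
  ext i j
  simp only [vecProj, Matrix.of_apply, Pi.smul_apply, Matrix.smul_apply, smul_eq_mul, star_mul']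
  ring

theorem trace_vecProj (v : Fin d → ℂ) : (vecProj v).trace = ((∑ i, ‖v i‖ ^ 2 : ℝ) : ℂ) := by
  simp only [Matrix.trace, Matrix.diag, vecProj, Matrix.of_apply, Complex.ofReal_sum,
    Complex.ofReal_pow, RCLike.star_def, Complex.mul_conj']

theorem isHermitian_vecProj (v : Fin d → ℂ) : (vecProj v).IsHermitian := by
  ext i j
  simp only [Matrix.conjTranspose_apply, vecProj, Matrix.of_apply, star_mul', star_star]
  ring

theorem piKron_smul (c : Fin k → ℂ) (M : Fin k → Matrix (Fin d) (Fin d) ℂ) :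
    piKron (fun i => c i • M i) = (∏ i, c i) • piKron M := by
  ext f g
  simp only [piKron, Matrix.of_apply, Matrix.smul_apply, smul_eq_mul, Finset.prod_mul_distrib]

theorem trace_piKron (M : Fin k → Matrix (Fin d) (Fin d) ℂ) :
    (piKron M).trace = ∏ i, (M i).trace := by
  simp only [Matrix.trace, Matrix.diag, piKron, Matrix.of_apply, Finset.prod_univ_sum,
    Fintype.piFinset_univ]

theorem isHermitian_piKron {M : Fin k → Matrix (Fin d) (Fin d) ℂ} (hM : ∀ i, (M i).IsHermitian) :
    (piKron M).IsHermitian := by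
  ext f g
  simp only [Matrix.conjTranspose_apply, piKron, Matrix.of_apply, star_prod]
  exact Finset.prod_congr rfl fun i _ => (hM i).apply (f i) (g i)

theorem exists_unit_vecProj_eq_smul (hd : 0 < d) (v : Fin d → ℂ) :
    ∃ u : Fin d → ℂ, ∑ i, ‖u i‖ ^ 2 = 1 ∧
      vecProj v = ((∑ i, ‖v i‖ ^ 2 : ℝ) : ℂ) • vecProj u := by
  set N := ∑ i, ‖v i‖ ^ 2 with hN
  by_cases hN0 : N = 0
  · refine ⟨Pi.single ⟨0, hd⟩ 1, ?_, ?_⟩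
    · simp [Pi.single_apply, apply_ite]
    have hv : v = 0 := by
      ext i
      simpa using (Finset.sum_eq_zero_iff_of_nonneg (fun i _ => sq_nonneg ‖v i‖)).mp hN0 i
        (Finset.mem_univ i)
    ext i j
    simp [hv, hN0, vecProj]
  · have hNpos : 0 < N := lt_of_le_of_ne (by positivity) (Ne.symm hN0)
    refine ⟨((√N)⁻¹ : ℂ) • v, ?_, ?_⟩
    · simp only [Pi.smul_apply, smul_eq_mul, norm_mul, mul_pow, ← Finset.mul_sum, ← hN]
      rw [norm_inv, Complex.norm_real, Real.norm_of_nonneg (Real.sqrt_nonneg N), inv_pow,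
        Real.sq_sqrt hNpos.le, inv_mul_cancel₀ hN0]
    · have hscale : ((√N : ℂ))⁻¹ * star ((√N : ℂ))⁻¹ = (N : ℂ)⁻¹ := by
        rw [star_inv₀, Complex.star_def, Complex.conj_ofReal, ← mul_inv, ← Complex.ofReal_mul,
          Real.mul_self_sqrt hNpos.le]
      rw [vecProj_smul, hscale, smul_smul, mul_inv_cancel₀ (by exact_mod_cast hN0), one_smul]

def pureTensorPowers (k d : ℕ) : Set (Matrix (Fin k → Fin d) (Fin k → Fin d) ℂ) :=
  {A | ∃ φ : Fin d → ℂ, ∑ i, ‖φ i‖ ^ 2 = 1 ∧ piKron (fun _ => vecProj φ) = A}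

theorem trace_of_mem_pureTensorPowers {A : Matrix (Fin k → Fin d) (Fin k → Fin d) ℂ}
    (hA : A ∈ pureTensorPowers k d) : A.trace = 1 := by
  obtain ⟨φ, hφ, rfl⟩ := hA
  simp [trace_piKron, trace_vecProj, hφ]

theorem isSelfAdjoint_of_mem_pureTensorPowers {A : Matrix (Fin k → Fin d) (Fin k → Fin d) ℂ}
    (hA : A ∈ pureTensorPowers k d) : IsSelfAdjoint A := by
  obtain ⟨φ, -, rfl⟩ := hA
  exact isHermitian_piKron fun _ => isHermitian_vecProj φ

theorem exists_mem_pureTensorPowers_smul_eq (hd : 0 < d) (v : Fin d → ℂ) :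
    ∃ A ∈ pureTensorPowers k d,
      piKron (fun _ : Fin k => vecProj v) = (((∑ i, ‖v i‖ ^ 2) ^ k : ℝ) : ℂ) • A := by
  obtain ⟨u, hu, hvu⟩ := exists_unit_vecProj_eq_smul hd v
  refine ⟨_, ⟨u, hu, rfl⟩, ?_⟩
  rw [hvu, piKron_smul, Finset.prod_const, Finset.card_univ, Fintype.card_fin, Complex.ofReal_pow]

end TensorPowers

theorem sum_permMat_apply (d : ℕ) (f g : Fin 4 → Fin d) :
    (∑ π, permMat d π) f g = Nat.card {π : Equiv.Perm (Fin 4) // f ∘ π = g} := by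
  simp only [Matrix.sum_apply, permMat, Matrix.of_apply, Finset.sum_boole,
    Nat.card_eq_fintype_card, Fintype.card_subtype, funext_iff, Function.comp_apply, eq_comm]

theorem sum_permMat_ne_zero {d : ℕ} (hd : 0 < d) : ∑ π, permMat d π ≠ 0 := by
  intro h
  have h0 := congrFun (congrFun h fun _ => ⟨0, hd⟩) fun _ => ⟨0, hd⟩
  rw [sum_permMat_apply, Matrix.zero_apply, Nat.cast_eq_zero] at h0
  have : Nonempty {π : Equiv.Perm (Fin 4) //
      (fun _ => (⟨0, hd⟩ : Fin d)) ∘ π = fun _ => ⟨0, hd⟩} := ⟨⟨1, rfl⟩⟩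
  exact Nat.card_pos.ne' h0

theorem sum_smul_piKron_vecProj_eq_sum_permMat {Ω : Type*} [Fintype Ω] (p : Ω → ℝ) (w : Ω → ℂ)
    (hw : ∀ a b, a ≤ 4 → b ≤ 4 →
      ∑ ω, (p ω : ℂ) * w ω ^ a * star (w ω) ^ b = if a = b then (a.factorial : ℂ) else 0)
    (d : ℕ) :
    ∑ x : Fin d → Ω, ((∏ j, p (x j) : ℝ) : ℂ) • piKron (fun _ : Fin 4 => vecProj (w ∘ x)) =
      ∑ π, permMat d π := by
  ext f g
  set a := fun j => Nat.card {i // f i = j}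
  set b := fun j => Nat.card {i // g i = j}
  have hentry : ∀ x : Fin d → Ω,
      (((∏ j, p (x j) : ℝ) : ℂ) • piKron (fun _ : Fin 4 => vecProj (w ∘ x))) f g =
        ∏ j, (p (x j) : ℂ) * w (x j) ^ a j * star (w (x j)) ^ b j := by
    intro x
    simp only [Matrix.smul_apply, piKron, vecProj, Matrix.of_apply, Function.comp_apply,
      smul_eq_mul, Finset.prod_mul_distrib, Complex.ofReal_prod,
      Fintype.prod_comp_eq_prod_pow_card (fun j => w (x j)) f,
      Fintype.prod_comp_eq_prod_pow_card (fun j => star (w (x j))) g, a, b, mul_assoc]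
  calc (∑ x : Fin d → Ω, ((∏ j, p (x j) : ℝ) : ℂ) •
          piKron (fun _ : Fin 4 => vecProj (w ∘ x))) f g
      = ∏ j, ∑ ω, (p ω : ℂ) * w ω ^ a j * star (w ω) ^ b j := by
        rw [Matrix.sum_apply, Fintype.prod_sum]
        exact Finset.sum_congr rfl fun x _ => hentry x
    _ = ∏ j, if a j = b j then ((a j).factorial : ℂ) else 0 :=
        Finset.prod_congr rfl fun j _ =>
          hw _ _ ((Finite.card_subtype_le _).trans_eq (Nat.card_fin 4))
            ((Finite.card_subtype_le _).trans_eq (Nat.card_fin 4))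
    _ = (∑ π, permMat d π) f g := by
        rw [sum_permMat_apply, Equiv.Perm.card_comp_eq]
        push_cast
        rfl

/-- A quadrature rule reproducing the moments `∫₀^∞ t^a e^{-t} dt = a!` for `a ≤ 4`. -/
noncomputable def radialNodes : Fin 4 → ℝ := ![0, 1, 2, 5]

noncomputable def radialWeights : Fin 4 → ℝ := ![3 / 10, 1 / 2, 1 / 6, 1 / 30]

theorem sum_radialWeights_mul_radialNodes_pow {a : ℕ} (ha : a ≤ 4) :
    ∑ k, radialWeights k * radialNodes k ^ a = a.factorial := by
  interval_cases a <;> norm_num [Fin.sum_univ_four, radialWeights, radialNodes, Nat.factorial,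
    Matrix.cons_val_two, Matrix.cons_val_three]

/-- A finite stand-in for a standard complex Gaussian: a uniform fifth root of unity times the
square root of a variable distributed by the quadrature rule above. -/
noncomputable def siteWeight (ω : Fin 5 × Fin 4) : ℝ := radialWeights ω.2 / 5

noncomputable def siteValue (ω : Fin 5 × Fin 4) : ℂ :=
  Complex.exp (2 * Real.pi * Complex.I / 5) ^ (ω.1 : ℕ) * √(radialNodes ω.2)

theorem siteWeight_nonneg (ω : Fin 5 × Fin 4) : 0 ≤ siteWeight ω := by
  fin_cases ω <;> norm_num [siteWeight, radialWeights]

theorem sum_siteWeight_mul_siteValue_pow {a b : ℕ} (ha : a ≤ 4) (hb : b ≤ 4) :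
    ∑ ω, (siteWeight ω : ℂ) * siteValue ω ^ a * star (siteValue ω) ^ b =
      if a = b then (a.factorial : ℂ) else 0 := by
  set ζ := Complex.exp (2 * Real.pi * Complex.I / 5)
  have hζ : IsPrimitiveRoot ζ 5 := by simpa using Complex.isPrimitiveRoot_exp 5 (by norm_num)
  have hsplit : ∀ ω : Fin 5 × Fin 4,
      (siteWeight ω : ℂ) * siteValue ω ^ a * star (siteValue ω) ^ b =
        (5⁻¹ * ((ζ ^ (ω.1 : ℕ)) ^ a * star (ζ ^ (ω.1 : ℕ)) ^ b)) *
          (radialWeights ω.2 * (√(radialNodes ω.2) : ℂ) ^ (a + b)) := by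
    intro ω
    simp only [siteWeight, siteValue, star_mul', RCLike.star_def, Complex.conj_ofReal]
    push_cast
    ring
  simp only [hsplit, Fintype.sum_prod_type, ← Finset.mul_sum, ← Finset.sum_mul]
  rw [hζ.sum_pow_mul_star_pow (by omega) (by omega)]
  split_ifs with hab
  · subst hab
    have hnodes : ∀ k, (√(radialNodes k) : ℂ) ^ (a + a) = (radialNodes k ^ a : ℝ) := by
      intro k
      have hk : 0 ≤ radialNodes k := by fin_cases k <;> norm_num [radialNodes]
      rw [← two_mul, pow_mul, ← Complex.ofReal_pow, Real.sq_sqrt hk, Complex.ofReal_pow]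
    simp only [hnodes, ← Complex.ofReal_mul, ← Complex.ofReal_sum,
      sum_radialWeights_mul_radialNodes_pow ha]
    norm_num
  · simp

theorem exists_sum_permMat_eq_sum_smul {d : ℕ} (hd : 0 < d) :
    ∃ (c : (Fin d → Fin 5 × Fin 4) → ℝ)
      (s : (Fin d → Fin 5 × Fin 4) → Matrix (Fin 4 → Fin d) (Fin 4 → Fin d) ℂ),
      (∀ x, 0 ≤ c x) ∧ (∀ x, s x ∈ pureTensorPowers 4 d) ∧
        ∑ π, permMat d π = ∑ x, (c x : ℂ) • s x := by
  choose s hs hvs using fun x : Fin d → Fin 5 × Fin 4 =>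
    exists_mem_pureTensorPowers_smul_eq (k := 4) hd (siteValue ∘ x)
  refine ⟨fun x => (∏ j, siteWeight (x j)) * (∑ i, ‖siteValue (x i)‖ ^ 2) ^ 4, s,
    fun x => mul_nonneg (Finset.prod_nonneg fun j _ => siteWeight_nonneg _) (by positivity),
    hs, ?_⟩
  rw [← sum_smul_piKron_vecProj_eq_sum_permMat siteWeight siteValue
    (fun _ _ => sum_siteWeight_mul_siteValue_pow)]
  refine Finset.sum_congr rfl fun x _ => ?_
  rw [hvs x, smul_smul, Complex.ofReal_mul]
  rfl

theorem inv_trace_smul_symProj4_mem_convexHull {d : ℕ} (hd : 0 < d) :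
    (symProj4 d).trace⁻¹ • symProj4 d ∈ convexHull ℝ (pureTensorPowers 4 d) := by
  obtain ⟨c, s, hc, hs, hsum⟩ := exists_sum_permMat_eq_sum_smul hd
  have hscale : (symProj4 d).trace⁻¹ • symProj4 d =
      (∑ π, permMat d π).trace⁻¹ • ∑ π, permMat d π := by
    rw [symProj4, Matrix.trace_smul, smul_smul, smul_eq_mul, mul_inv_rev, mul_assoc,
      inv_mul_cancel₀ (by positivity), mul_one]
  rw [hscale, hsum]
  exact inv_trace_smul_sum_mem_convexHull (fun _ => trace_of_mem_pureTensorPowers) hc hs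
    (hsum ▸ sum_permMat_ne_zero hd)

/-- Every dimension d admits a 4-design of size at most d^8: a finite ensemble of at most
d^8 pure states whose average fourth tensor power equals the maximally mixed state on the
symmetric subspace of (C^d)^{⊗4}. -/
theorem exists_four_design (d : ℕ) (hd : 0 < d) :
    ∃ N : ℕ, N ≤ d ^ 8 ∧
      ∃ (p : Fin N → ℝ) (φ : Fin N → (Fin d → ℂ)),
        (∀ x, 0 ≤ p x) ∧ (∑ x, p x = 1) ∧
        (∀ x, ∑ i, ‖φ x i‖ ^ 2 = 1) ∧
        ∑ x, (p x : ℂ) • piKron (fun _ : Fin 4 => vecProj (φ x)) =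
          (symProj4 d).trace⁻¹ • symProj4 d := by
  obtain ⟨N, hN, p, A, hp, hp1, hA, hpA⟩ :=
    exists_convexCombination_card_le_finrank (selfAdjoint.submodule ℝ _)
      (fun _ => isSelfAdjoint_of_mem_pureTensorPowers)
      (Complex.reLm ∘ₗ Matrix.traceLinearMap _ ℝ ℂ)
      (fun A hA => by simp [trace_of_mem_pureTensorPowers hA])
      (inv_trace_smul_symProj4_mem_convexHull hd)
  choose φ hφ hφA using hA
  refine ⟨N, hN.trans ?_, p, φ, hp, hp1, hφ, ?_⟩
  · calc _ ≤ Fintype.card (Fin 4 → Fin d) ^ 2 := finrank_selfAdjoint_matrix_le _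
      _ = d ^ 8 := by rw [Fintype.card_fun, Fintype.card_fin, Fintype.card_fin, ← pow_mul]
  · simpa only [hφA, Complex.coe_smul] using hpA
end
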